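/- arXiv:2012.00231 — 2 statements merged into one kernel-verified Lean document; each statement's English description precedes it below -/
import Mathlib

section
/- Let X be a topological space and A ⊆ X a closed set such that the zeroth singular homology group H_0(U, U \ A) is trivial for every open set U ⊆ X. Then A is nowhere dense in X (i.e., the interior of A is empty). -/
open CategoryTheory CategoryTheory.Limits AlgebraicTopology

/-- The singular chain complex functor, obtained from the singular simplicial set by applying
the free abelian group functor levelwise and taking the alternating face map complex. -/
noncomputable def singularChainFunctor : TopCat.{0} ⥤ ChainComplex AddCommGrpCat.{0} ℕ :=
  TopCat.toSSet ⋙ ((SimplicialObject.whiskering _ _).obj AddCommGrpCat.free) ⋙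
    alternatingFaceMapComplex AddCommGrpCat

/-- The relative singular homology `H_k(X, S)` of a space `X` and a subset `S ⊆ X`,
defined as the homology of the cokernel of the induced map of singular chain complexes. -/
noncomputable def relSingularHomology (X : Type) [TopologicalSpace X] (S : Set X) (k : ℕ) :
    AddCommGrpCat :=
  (HomologicalComplex.homologyFunctor AddCommGrpCat (ComplexShape.down ℕ) k).obj
    (cokernel (singularChainFunctor.map
      (TopCat.ofHom ⟨Subtype.val, continuous_subtype_val⟩ : TopCat.of S ⟶ TopCat.of X)))

/-- The singular homology `H_k(U, V)` of a pair of subsets `V ⊆ U` of an ambient space `X`,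
where `U` carries the subspace topology. -/
noncomputable def pairHomology (X : Type) [TopologicalSpace X] (U V : Set X) (k : ℕ) :
    AddCommGrpCat :=
  relSingularHomology U {x : U | (x : X) ∈ V} k

/-- The homomorphism `H_k(U', V') → H_k(U, V)` induced by the inclusion of pairs. -/
noncomputable def pairInclHom (X : Type) [TopologicalSpace X] {U V U' V' : Set X}
    (hU : U' ⊆ U) (hV : V' ⊆ V) (k : ℕ) :
    pairHomology X U' V' k ⟶ pairHomology X U V k :=
  (HomologicalComplex.homologyFunctor AddCommGrpCat (ComplexShape.down ℕ) k).map
    (cokernel.map _ _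
      (singularChainFunctor.map
        (TopCat.ofHom ⟨fun x => ⟨Set.inclusion hU x.1, hV x.2⟩,
          (((continuous_inclusion hU).comp continuous_subtype_val).subtype_mk _)⟩ :
          TopCat.of {x : U' | (x : X) ∈ V'} ⟶ TopCat.of {x : U | (x : X) ∈ V}))
      (singularChainFunctor.map
        (TopCat.ofHom ⟨Set.inclusion hU, continuous_inclusion hU⟩ : TopCat.of U' ⟶ TopCat.of U))
      (by rw [← Functor.map_comp, ← Functor.map_comp]; congr 1))

/-- A closed set `A ⊆ X` is a homological `Z_n`-set (`n ∈ ℕ∞`) if the singular homology groups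
`H_k(U, U \ A)` are trivial for all open `U ⊆ X` and all `k ≤ n`. -/
def IsHomologicalZSet (X : Type) [TopologicalSpace X] (n : ℕ∞) (A : Set X) : Prop :=
  IsClosed A ∧ ∀ U : Set X, IsOpen U → ∀ k : ℕ, (k : ℕ∞) ≤ n →
    Subsingleton (pairHomology X U (U \ A) k)

/-! If `U = interior A` were nonempty, then `U \ A = ∅`, so `H_0(U, U \ A)` is the absolute group
`H_0(U)`. The augmentation of singular chains, which sends every `0`-simplex to `1`, vanishes on
the (zero) chains of the empty subspace and is onto `ℤ` because `U` has a point; it therefore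
induces a surjection `H_0(U, U \ A) → ℤ`, contradicting the triviality of `H_0(U, U \ A)`. -/

lemma TopCat.isEmpty_toSSet_obj (Y : TopCat.{0}) [IsEmpty Y] (n : SimplexCategoryᵒᵖ) :
    IsEmpty ((TopCat.toSSet.obj Y).obj n) :=
  ⟨fun σ => IsEmpty.false ((show SimplexCategory.toTop.obj n.unop ⟶ Y from σ.down)
    (Classical.arbitrary _))⟩

lemma isZero_singularChainFunctor_obj_X (Y : TopCat.{0}) [IsEmpty Y] (n : ℕ) :
    IsZero ((singularChainFunctor.obj Y).X n) :=
  have := Y.isEmpty_toSSet_obj (Opposite.op (SimplexCategory.mk n))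
  have : Subsingleton ((singularChainFunctor.obj Y).X n) :=
    inferInstanceAs (Subsingleton (FreeAbelianGroup _))
  AddCommGrpCat.isZero_of_subsingleton _

noncomputable def singularAugmentationHom (Y : TopCat.{0}) :
    (singularChainFunctor.obj Y).X 0 ⟶ AddCommGrpCat.of ℤ :=
  AddCommGrpCat.ofHom (FreeAbelianGroup.lift fun _ => 1)

lemma d_one_zero_comp_singularAugmentationHom (Y : TopCat.{0}) :
    (singularChainFunctor.obj Y).d 1 0 ≫ singularAugmentationHom Y = 0 := by
  refine AddCommGrpCat.hom_ext (FreeAbelianGroup.lift_ext _ _ fun σ => ?_)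
  show singularAugmentationHom Y ((singularChainFunctor.obj Y).d 1 0 (FreeAbelianGroup.of σ)) = 0
  have hd : (singularChainFunctor.obj Y).d 1 0 = AlternatingFaceMapComplex.objD
      (((SimplicialObject.whiskering _ _).obj AddCommGrpCat.free).obj (TopCat.toSSet.obj Y)) 0 :=
    alternatingFaceMapComplex_obj_d _ _
  rw [hd, AlternatingFaceMapComplex.objD, Fin.sum_univ_two]
  simp only [Fin.val_zero, Fin.val_one, pow_zero, pow_one, one_smul, neg_smul]
  erw [AddCommGrpCat.hom_add_apply, AddMonoidHom.neg_apply, map_add, map_neg]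
  change (FreeAbelianGroup.lift fun _ => (1 : ℤ)) (FreeAbelianGroup.map _ (.of σ)) +
    -(FreeAbelianGroup.lift fun _ => (1 : ℤ)) (FreeAbelianGroup.map _ (.of σ)) = 0
  simp only [FreeAbelianGroup.map_of_apply, FreeAbelianGroup.lift_apply_of, add_neg_cancel]

noncomputable def singularAugmentation (Y : TopCat.{0}) :
    singularChainFunctor.obj Y ⟶ (ChainComplex.single₀ AddCommGrpCat).obj (.of ℤ) :=
  (ChainComplex.toSingle₀Equiv _ _).symm
    ⟨singularAugmentationHom Y, d_one_zero_comp_singularAugmentationHom Y⟩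

lemma singularAugmentationHom_surjective (Y : TopCat.{0}) [Nonempty Y] :
    Function.Surjective (singularAugmentationHom Y) := fun n => by
  let y : Y := Classical.arbitrary _
  let σ : (TopCat.toSSet.obj Y).obj (Opposite.op (SimplexCategory.mk 0)) :=
    ULift.up (TopCat.ofHom ⟨fun _ => y, continuous_const⟩)
  refine ⟨n • FreeAbelianGroup.of σ, ?_⟩
  change (FreeAbelianGroup.lift fun _ => (1 : ℤ)) (n • .of σ) = n
  rw [map_zsmul, FreeAbelianGroup.lift_apply_of, smul_eq_mul, mul_one]

lemma epi_homologyMap_singularAugmentation_zero (Y : TopCat.{0}) [Nonempty Y] :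
    Epi (HomologicalComplex.homologyMap (singularAugmentation Y) 0) := by
  have : Epi ((singularAugmentation Y).f 0) := by
    rw [singularAugmentation, ChainComplex.toSingle₀Equiv_symm_apply_f_zero]
    exact (AddCommGrpCat.epi_iff_surjective _).2 (singularAugmentationHom_surjective Y)
  exact HomologicalComplex.epi_homologyMap_of_epi_of_not_rel _ 0 (by simp)

lemma nontrivial_relSingularHomology_zero_of_eq_empty (Y : Type) [TopologicalSpace Y]
    [Nonempty Y] (S : Set Y) (hS : S = ∅) : Nontrivial (relSingularHomology Y S 0) := by
  subst hS
  set ι := singularChainFunctor.map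
    (TopCat.ofHom ⟨Subtype.val, continuous_subtype_val⟩ : TopCat.of (∅ : Set Y) ⟶ TopCat.of Y)
  have hι : ι ≫ singularAugmentation (TopCat.of Y) = 0 :=
    HomologicalComplex.hom_ext _ _ fun n =>
      (isZero_singularChainFunctor_obj_X (TopCat.of (∅ : Set Y)) n).eq_of_src _ _
  let ε := cokernel.desc ι (singularAugmentation (TopCat.of Y)) hι
  have hε : Epi (HomologicalComplex.homologyMap ε 0) := by
    have := epi_homologyMap_singularAugmentation_zero (TopCat.of Y)
    rw [← cokernel.π_desc ι _ hι, HomologicalComplex.homologyMap_comp] at this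
    exact epi_of_epi (HomologicalComplex.homologyMap (cokernel.π ι) 0) _
  have : Nontrivial (((ChainComplex.single₀ AddCommGrpCat).obj (.of ℤ)).homology 0) :=
    ((forget AddCommGrpCat).mapIso
      (HomologicalComplex.singleObjHomologySelfIso _ 0 (AddCommGrpCat.of ℤ))).toEquiv.nontrivial
  show Nontrivial ((cokernel ι).homology 0)
  exact ((AddCommGrpCat.epi_iff_surjective _).1 hε).nontrivial

theorem homologicalZ0_interior_empty_general (X : Type) [TopologicalSpace X] (A : Set X)
    (h : ∀ U : Set X, IsOpen U → Subsingleton (pairHomology X U (U \ A) 0)) :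
    interior A = ∅ := by
  rw [← Set.not_nonempty_iff_eq_empty]
  rintro ⟨x, hx⟩
  have : Nonempty (interior A) := ⟨⟨x, hx⟩⟩
  have hempty : {z : interior A | (z : X) ∈ interior A \ A} = ∅ :=
    Set.eq_empty_of_forall_notMem fun z hz => hz.2 (interior_subset z.2)
  have : Nontrivial (pairHomology X (interior A) (interior A \ A) 0) :=
    nontrivial_relSingularHomology_zero_of_eq_empty _ _ hempty
  exact not_subsingleton _ (h (interior A) isOpen_interior)

/-- If `H_0(U, U \ A)` is trivial for every open `U`, then the closed set `A` is
nowhere dense. -/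
theorem homologicalZ0_interior_empty (X : Type) [TopologicalSpace X] (A : Set X)
    (hA : IsClosed A)
    (h : ∀ U : Set X, IsOpen U → Subsingleton (pairHomology X U (U \ A) 0)) :
    interior A = ∅ :=
  homologicalZ0_interior_empty_general X A h
end

section
/- Let X be a topological space and let A be a closed homological Z_n-set in X. Then for every open pair V ⊆ U in X, every m ≤ n, and every z ∈ H_m(U, V), there exists a class z' ∈ H_m(U \ A, V \ A) whose image under the inclusion-induced homomorphism H_m(U \ A, V \ A) → H_m(U, V) equals z. (In particular, z has a singular carrier disjoint from A.) -/
open CategoryTheory CategoryTheory.Limits AlgebraicTopology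

lemma mono_singularChainFunctor_map {Y Z : TopCat.{0}} (f : Y ⟶ Z) [Mono f] :
    Mono (singularChainFunctor.map f) :=
  HomologicalComplex.mono_of_mono_f _ fun _ =>
    AddCommGrpCat.free.map_mono ((TopCat.toSSet.map f).app _)

section SubspaceChains

variable (Y : Type) [TopologicalSpace Y] (S : Set Y)

noncomputable def singularChainShortComplex : ShortComplex (ChainComplex AddCommGrpCat.{0} ℕ) :=
  ShortComplex.mk
    (singularChainFunctor.map
      (TopCat.ofHom ⟨Subtype.val, continuous_subtype_val⟩ : TopCat.of S ⟶ TopCat.of Y))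
    (cokernel.π _) (cokernel.condition _)

lemma singularChainShortComplex_shortExact : (singularChainShortComplex Y S).ShortExact := by
  have : Mono (TopCat.ofHom ⟨Subtype.val, continuous_subtype_val⟩ : TopCat.of S ⟶ TopCat.of Y) :=
    (TopCat.mono_iff_injective _).2 Subtype.val_injective
  have : Mono (singularChainShortComplex Y S).f := mono_singularChainFunctor_map _
  have : Epi (singularChainShortComplex Y S).g := coequalizer.π_epi
  exact ⟨ShortComplex.exact_of_g_is_cokernel _ (cokernelIsCokernel _)⟩

variable {Y S}

lemma epi_homologyMap_subtypeVal {k : ℕ} (hk : Subsingleton (relSingularHomology Y S k)) :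
    Epi (HomologicalComplex.homologyMap (singularChainShortComplex Y S).f k) :=
  ((singularChainShortComplex_shortExact Y S).homology_exact₂ k).epi_f
    ((AddCommGrpCat.isZero_iff_subsingleton.2 hk).eq_of_tgt _ _)

lemma mono_homologyMap_subtypeVal {k : ℕ} (hk : Subsingleton (relSingularHomology Y S (k + 1))) :
    Mono (HomologicalComplex.homologyMap (singularChainShortComplex Y S).f k) :=
  ((singularChainShortComplex_shortExact Y S).homology_exact₁ (k + 1) k rfl).mono_g
    ((AddCommGrpCat.isZero_iff_subsingleton.2 hk).eq_of_src _ _)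

end SubspaceChains

section Pairs

variable {X : Type} [TopologicalSpace X] {S T U V U' V' : Set X}

def Homeomorph.subtypeOfSubset (h : S ⊆ T) : S ≃ₜ {x : T | (x : X) ∈ S} where
  toFun x := ⟨⟨x, h x.2⟩, x.2⟩
  invFun y := ⟨y, y.2⟩
  left_inv _ := rfl
  right_inv _ := rfl
  continuous_toFun := (continuous_subtype_val.subtype_mk _).subtype_mk _
  continuous_invFun := (continuous_subtype_val.comp continuous_subtype_val).subtype_mk _

abbrev inclusionHom (h : S ⊆ T) : TopCat.of S ⟶ TopCat.of T :=
  TopCat.ofHom ⟨Set.inclusion h, continuous_inclusion h⟩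

def inclusionArrowIsoSubtypeVal (h : S ⊆ T) :
    Arrow.mk (inclusionHom h) ≅
      Arrow.mk (TopCat.ofHom ⟨Subtype.val, continuous_subtype_val⟩ :
        TopCat.of {x : T | (x : X) ∈ S} ⟶ TopCat.of T) :=
  Arrow.isoMk (TopCat.isoOfHomeo (Homeomorph.subtypeOfSubset h)) (Iso.refl _)

abbrev pairRestrictHom (hU : U' ⊆ U) (hV : V' ⊆ V) :
    TopCat.of {x : U' | (x : X) ∈ V'} ⟶ TopCat.of {x : U | (x : X) ∈ V} :=
  TopCat.ofHom ⟨fun x => ⟨Set.inclusion hU x.1, hV x.2⟩,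
    ((continuous_inclusion hU).comp continuous_subtype_val).subtype_mk _⟩

def inclusionArrowIsoPairRestrict (hU : U' ⊆ U) (hV : V' ⊆ V)
    (hVU : V ⊆ U) (hVU' : V' ⊆ U') :
    Arrow.mk (inclusionHom hV) ≅ Arrow.mk (pairRestrictHom hU hV) :=
  Arrow.isoMk (TopCat.isoOfHomeo (Homeomorph.subtypeOfSubset hVU'))
    (TopCat.isoOfHomeo (Homeomorph.subtypeOfSubset hVU))

noncomputable abbrev singularHomologyFunctor (k : ℕ) : TopCat.{0} ⥤ AddCommGrpCat.{0} :=
  singularChainFunctor ⋙ HomologicalComplex.homologyFunctor _ _ k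

lemma epi_homologyMap_inclusion (h : S ⊆ T) {k : ℕ}
    (hk : Subsingleton (pairHomology X T S k)) :
    Epi ((singularHomologyFunctor k).map (inclusionHom h)) :=
  ((MorphismProperty.epimorphisms _).arrow_mk_iso_iff
    ((singularHomologyFunctor k).mapArrow.mapIso (inclusionArrowIsoSubtypeVal h))).2
      (epi_homologyMap_subtypeVal hk)

lemma mono_homologyMap_inclusion (h : S ⊆ T) {k : ℕ}
    (hk : Subsingleton (pairHomology X T S (k + 1))) :
    Mono ((singularHomologyFunctor k).map (inclusionHom h)) :=
  ((MorphismProperty.monomorphisms _).arrow_mk_iso_iff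
    ((singularHomologyFunctor k).mapArrow.mapIso (inclusionArrowIsoSubtypeVal h))).2
      (mono_homologyMap_subtypeVal hk)

lemma epi_homologyMap_pairRestrictHom (hU : U' ⊆ U) (hV : V' ⊆ V)
    (hVU : V ⊆ U) (hVU' : V' ⊆ U') {k : ℕ} (hk : Subsingleton (pairHomology X V V' k)) :
    Epi ((singularHomologyFunctor k).map (pairRestrictHom hU hV)) :=
  ((MorphismProperty.epimorphisms _).arrow_mk_iso_iff
    ((singularHomologyFunctor k).mapArrow.mapIso (inclusionArrowIsoPairRestrict hU hV hVU hVU'))).1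
      (epi_homologyMap_inclusion hV hk)

noncomputable def pairInclShortComplexMap (hU : U' ⊆ U) (hV : V' ⊆ V) :
    singularChainShortComplex U' {x : U' | (x : X) ∈ V'} ⟶
      singularChainShortComplex U {x : U | (x : X) ∈ V} where
  τ₁ := singularChainFunctor.map (pairRestrictHom hU hV)
  τ₂ := singularChainFunctor.map (inclusionHom hU)
  -- definitionally the chain map inducing `pairInclHom`
  τ₃ := cokernel.map _ _ (singularChainFunctor.map (pairRestrictHom hU hV))
    (singularChainFunctor.map (inclusionHom hU))
    (by rw [← Functor.map_comp, ← Functor.map_comp]; rfl)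
  comm₁₂ := by
    dsimp [singularChainShortComplex]
    rw [← Functor.map_comp, ← Functor.map_comp]; rfl
  comm₂₃ := by simp [singularChainShortComplex]

theorem epi_pairInclHom_of_subsingleton (hU : U' ⊆ U) (hV : V' ⊆ V) (hVU : V ⊆ U)
    (hVU' : V' ⊆ U') {m : ℕ}
    (hUU' : Subsingleton (pairHomology X U U' m))
    (hVV' : ∀ j, j + 1 = m → Subsingleton (pairHomology X V V' j)) :
    Epi (pairInclHom X hU hV m) :=
  HomologicalComplex.HomologySequence.epi_homologyMap_τ₃ (pairInclShortComplexMap hU hV)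
    (singularChainShortComplex_shortExact _ _) (singularChainShortComplex_shortExact _ _) m
    (epi_homologyMap_inclusion hU hUU')
    (fun j hj => epi_homologyMap_pairRestrictHom hU hV hVU hVU' (hVV' j hj))
    (fun j hj => mono_homologyMap_inclusion hU (by rwa [show j + 1 = m from hj]))

end Pairs

/-- If `A` is a homological `Z_n`-set, then every class in `H_m(U, V)` (`m ≤ n`, `V ⊆ U` open)
comes from `H_m(U \ A, V \ A)` under the inclusion-induced homomorphism. -/
theorem exists_preimage_of_homologicalZSet (X : Type) [TopologicalSpace X] (n : ℕ∞)
    (A : Set X) (hA : IsHomologicalZSet X n A) (U V : Set X) (hU : IsOpen U) (hV : IsOpen V)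
    (hVU : V ⊆ U) (m : ℕ) (hm : (m : ℕ∞) ≤ n) (z : pairHomology X U V m) :
    ∃ z' : pairHomology X (U \ A) (V \ A) m,
      pairInclHom X (Set.diff_subset : U \ A ⊆ U) (Set.diff_subset : V \ A ⊆ V) m z' = z := by
  obtain ⟨-, hZ⟩ := hA
  have hEpi := epi_pairInclHom_of_subsingleton Set.sdiff_subset Set.sdiff_subset hVU
    (Set.sdiff_subset_sdiff_left hVU) (hZ U hU m hm)
    fun j hj => hZ V hV j ((Nat.cast_le.2 (by omega)).trans hm)
  exact (AddCommGrpCat.epi_iff_surjective _).1 hEpi z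
end
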